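/- Let $V$ and $W$ be symmetric bounded linear operators on a Hilbert space $H$ with $V$ coercive ($\langle V\phi, \phi \rangle \geq c\|\phi\|^2$) and $W \geq 0$, and let $K'$ be bounded with adjoint $K$. Define $S = W + (I - K')V^{-1}(I - K)$. Then for any $u, \hat u \in H$ and $\phi, \hat\phi \in H$, with $\eta = \frac{1}{2}(\hat\phi - \phi + V^{-1}(I - K)(\hat u - u))$, the following identity holds: $\langle W(\hat u - u), \hat u - u\rangle/2 + \langle S(\hat u - u), \hat u - u\rangle/2 + \langle V(\hat\phi - \phi), \hat\phi - \phi\rangle/2 = \langle W(\hat u - u) + (K' - I)(\hat\phi - \phi), \hat u - u\rangle + \langle \eta, V(\hat\phi - \phi) + (I - K)(\hat u - u)\rangle$. -/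

import Mathlib

open ContinuousLinearMap in
/-- Algebraic identity from the proof of Lemma 5.2: testing the coupled bilinear form with
the special test function `η = ½(φ̂ - φ + V⁻¹(I-K)(û - u))` recovers the sum of the
quadratic forms of `W`, `S = W + (I-K')V⁻¹(I-K)` and `V`, each with factor `½`. -/
theorem coupled_form_special_test_identity
    (H : Type*) [NormedAddCommGroup H] [InnerProductSpace ℝ H] [CompleteSpace H]
    (V W K' K Vinv : H →L[ℝ] H)
    (hVsym : ∀ x y : H, (inner ℝ (V x) y : ℝ) = inner ℝ x (V y))
    (c : ℝ) (hc : 0 < c) (hVcoer : ∀ x : H, c * ‖x‖ ^ 2 ≤ (inner ℝ (V x) x : ℝ))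
    (hWsym : ∀ x y : H, (inner ℝ (W x) y : ℝ) = inner ℝ x (W y))
    (hWpos : ∀ x : H, 0 ≤ (inner ℝ (W x) x : ℝ))
    (hadj : ∀ x y : H, (inner ℝ (K' x) y : ℝ) = inner ℝ x (K y))
    (hVinv₁ : Vinv.comp V = ContinuousLinearMap.id ℝ H)
    (hVinv₂ : V.comp Vinv = ContinuousLinearMap.id ℝ H)
    (u uhat φ φhat : H) :
    (inner ℝ (W (uhat - u)) (uhat - u) : ℝ) / 2 +
      (inner ℝ ((W + (ContinuousLinearMap.id ℝ H - K').comp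
        (Vinv.comp (ContinuousLinearMap.id ℝ H - K))) (uhat - u)) (uhat - u) : ℝ) / 2 +
      (inner ℝ (V (φhat - φ)) (φhat - φ) : ℝ) / 2 =
    (inner ℝ (W (uhat - u) + (K' - ContinuousLinearMap.id ℝ H) (φhat - φ)) (uhat - u) : ℝ) +
      (inner ℝ ((1/2 : ℝ) • (φhat - φ + Vinv ((ContinuousLinearMap.id ℝ H - K) (uhat - u))))
        (V (φhat - φ) + (ContinuousLinearMap.id ℝ H - K) (uhat - u)) : ℝ) := by
  set a := uhat - u with ha
  set b := φhat - φ with hb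
  have hVV : ∀ x : H, V (Vinv x) = x := fun x =>
    congrArg (fun T : H →L[ℝ] H => T x) hVinv₂
  have key : (inner ℝ (Vinv ((ContinuousLinearMap.id ℝ H - K) a)) (V b) : ℝ)
      = inner ℝ ((ContinuousLinearMap.id ℝ H - K) a) b := by
    rw [← hVsym, hVV]
  have hK : (inner ℝ ((K' - ContinuousLinearMap.id ℝ H) b) a : ℝ)
      = - inner ℝ b ((ContinuousLinearMap.id ℝ H - K) a) := by
    simp only [ContinuousLinearMap.sub_apply, ContinuousLinearMap.id_apply,
      inner_sub_left, inner_sub_right, hadj]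
    ring
  have hS : (inner ℝ ((ContinuousLinearMap.id ℝ H - K')
      ((Vinv.comp (ContinuousLinearMap.id ℝ H - K)) a)) a : ℝ)
      = inner ℝ (Vinv ((ContinuousLinearMap.id ℝ H - K) a)) ((ContinuousLinearMap.id ℝ H - K) a) := by
    simp only [ContinuousLinearMap.comp_apply, ContinuousLinearMap.sub_apply,
      ContinuousLinearMap.id_apply, inner_sub_left, inner_sub_right, hadj]
  simp only [ContinuousLinearMap.add_apply, ContinuousLinearMap.comp_apply,
    inner_add_left, inner_add_right, real_inner_smul_left]
  have h1 := key
  have h2 := hK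
  have h3 := hS
  have hsymb : (inner ℝ (V b) b : ℝ) = inner ℝ b (V b) := hVsym b b
  have hsym2 : (inner ℝ ((ContinuousLinearMap.id ℝ H - K) a) b : ℝ)
      = inner ℝ b ((ContinuousLinearMap.id ℝ H - K) a) := real_inner_comm _ _
  simp only [ContinuousLinearMap.comp_apply] at h3
  rw [h3]
  simp only [ContinuousLinearMap.sub_apply, ContinuousLinearMap.id_apply,
    inner_sub_left, inner_sub_right, hadj] at h1 h2 hsym2 ⊢
  linarith [hsymb]
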